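/- arXiv:2005.07629 — 2 statements merged into one kernel-verified Lean document; each statement's English description precedes it below -/
import Mathlib

section
/- Let φ_U : ℝ → ℝ be a smooth function equal to 1 on (-∞, 1-1/U] and 0 on [1+1/U, ∞) with derivatives φ_U^{(j)}(t) = O(U^j). Then its Mellin transform R_U(s) = ∫₀^∞ φ_U(t) t^{s-1} dt satisfies R_U(s) = 1/s + O(1/U) as U → ∞, uniformly for s in any fixed compact subset of {Re(s) > 0}. -/
open MeasureTheory Set Real Complex

/-- For `t ∈ [1/2, 2]` and `|x| ≤ A`, we have `t ^ x ≤ 2 ^ A`. -/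
lemma stmt3_rpow_bound {t x A : ℝ} (ht : t ∈ Set.Icc (1/2 : ℝ) 2) (hx : |x| ≤ A) :
    t ^ x ≤ (2 : ℝ) ^ A := by
  have ht0 : (0 : ℝ) < t := lt_of_lt_of_le (by norm_num) ht.1
  rw [Real.rpow_def_of_pos ht0, Real.rpow_def_of_pos (by norm_num : (0:ℝ) < 2)]
  apply Real.exp_le_exp.2
  have hlog : |Real.log t| ≤ Real.log 2 := by
    rw [abs_le]
    constructor
    · have : Real.log (1/2) ≤ Real.log t := Real.log_le_log (by norm_num) ht.1
      rw [Real.log_div one_ne_zero (by norm_num), Real.log_one] at this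
      linarith
    · exact Real.log_le_log ht0 ht.2
  calc Real.log t * x ≤ |Real.log t * x| := le_abs_self _
    _ = |Real.log t| * |x| := abs_mul _ _
    _ ≤ Real.log 2 * A := by
        apply mul_le_mul hlog hx (abs_nonneg _)
        exact Real.log_nonneg (by norm_num)

/-- the Mellin transform of the smooth cutoff φ_U satisfies
R_U(s) = 1/s + O(1/U), uniformly for s in a compact subset of {Re s > 0}. -/
theorem stmt3 (K : Set ℂ) (hK : IsCompact K) (hKre : ∀ s ∈ K, 0 < s.re) :
    ∃ C : ℝ, ∀ U : ℝ, 2 ≤ U → ∀ φ : ℝ → ℝ,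
      ContDiff ℝ (⊤ : ℕ∞) φ → Antitone φ →
      (∀ t : ℝ, t ≤ 1 - 1/U → φ t = 1) → (∀ t : ℝ, 1 + 1/U ≤ t → φ t = 0) →
      ∀ s ∈ K, ‖(∫ t in Set.Ioi (0:ℝ), (φ t : ℂ) * (t : ℂ) ^ (s - 1)) - 1/s‖ ≤ C / U := by
  obtain ⟨R, hR⟩ := hK.isBounded.exists_norm_le
  set B : ℝ := (2 : ℝ) ^ (|R| + 1) with hB
  have hBpos : 0 < B := Real.rpow_pos_of_pos (by norm_num) _
  refine ⟨2 * B, fun U hU φ hφsm hφanti hφ1 hφ0 s hs => ?_⟩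
  have hsre : 0 < s.re := hKre s hs
  have hU0 : (0 : ℝ) < U := lt_of_lt_of_le (by norm_num) hU
  have hUinv : 1 / U ≤ 1 / 2 := by
    rw [div_le_div_iff₀ hU0 (by norm_num)]; linarith
  have hUinv0 : 0 < 1 / U := by positivity
  set a : ℝ := 1 - 1/U with ha
  set b : ℝ := 1 + 1/U with hb
  have hab : a ≤ b := by simp only [ha, hb]; linarith
  have ha0 : (1/2 : ℝ) ≤ a := by simp only [ha]; linarith
  have hb2 : b ≤ 2 := by simp only [hb]; linarith
  have ha1 : a ≤ 1 := by simp only [ha]; linarith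
  have ha0' : (0:ℝ) < a := lt_of_lt_of_le one_half_pos ha0
  have hb1 : 1 ≤ b := by simp only [hb]; linarith
  -- φ takes values in [0,1]
  have hφ01 : ∀ t : ℝ, 0 ≤ φ t ∧ φ t ≤ 1 := by
    intro t
    constructor
    · have : φ (max t b) = 0 := hφ0 _ (le_max_right _ _)
      rw [← this]; exact hφanti (le_max_left _ _)
    · have : φ (min t a) = 1 := hφ1 _ (min_le_right _ _)
      rw [← this]; exact hφanti (min_le_left _ _)
  set ind : ℝ → ℂ := Set.indicator (Set.Ioc 0 1) (fun _ => (1 : ℂ)) with hind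
  set h : ℝ → ℂ := fun t => ((φ t : ℂ) - ind t) * (t : ℂ) ^ (s - 1) with hh
  have hmel := hasMellin_one_Ioc hsre
  -- the indicator integral
  have hindint : IntegrableOn (fun t : ℝ => ind t * (t : ℂ) ^ (s - 1)) (Set.Ioi 0) := by
    have := hmel.1
    rw [MellinConvergent] at this
    exact this.congr_fun (fun t _ => by dsimp only; rw [smul_eq_mul, mul_comm]) measurableSet_Ioi
  have hindval : (∫ t in Set.Ioi (0:ℝ), ind t * (t : ℂ) ^ (s - 1)) = 1 / s := by
    have := hmel.2
    rw [mellin] at this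
    rw [← this]
    exact setIntegral_congr_fun measurableSet_Ioi (fun t _ => by rw [smul_eq_mul, mul_comm])
  -- h vanishes off [a, b]
  have hzero : ∀ t ∈ Set.Ioi (0:ℝ) \ Set.Icc a b, h t = 0 := by
    intro t ht
    obtain ⟨ht0, htn⟩ := ht
    rw [Set.mem_Icc, not_and_or] at htn
    simp only [hh]
    rcases htn with htn | htn
    · push_neg at htn
      have h1 : φ t = 1 := hφ1 t htn.le
      have h2 : ind t = 1 := by
        rw [hind, Set.indicator_of_mem]
        exact ⟨ht0, le_trans htn.le ha1⟩
      rw [h1, h2]; simp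
    · push_neg at htn
      have h1 : φ t = 0 := hφ0 t htn.le
      have h2 : ind t = 0 := by
        rw [hind, Set.indicator_of_notMem]
        intro hmem
        exact absurd hmem.2 (not_le.2 (lt_of_le_of_lt hb1 htn))
      rw [h1, h2]; simp
  -- pointwise bound for h on [a, b]
  have hbound : ∀ t ∈ Set.Icc a b, ‖h t‖ ≤ B := by
    intro t ht
    have ht0 : 0 < t := lt_of_lt_of_le ha0' ht.1
    simp only [hh, norm_mul]
    have hnorm1 : ‖(φ t : ℂ) - ind t‖ ≤ 1 := by
      by_cases h1 : t ≤ 1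
      · have : ind t = 1 := Set.indicator_of_mem (Set.mem_Ioc.mpr ⟨ht0, h1⟩) _
        rw [this]
        have : (φ t : ℂ) - 1 = ((φ t - 1 : ℝ) : ℂ) := by push_cast; ring
        rw [this, Complex.norm_real, Real.norm_eq_abs, abs_le]
        have := hφ01 t
        constructor <;> linarith [this.1, this.2]
      · have : ind t = 0 := Set.indicator_of_notMem (fun hmem => h1 hmem.2) _
        rw [this, sub_zero, Complex.norm_real, Real.norm_eq_abs, abs_le]
        have := hφ01 t
        constructor <;> linarith [this.1, this.2]
    have hnorm2 : ‖(t : ℂ) ^ (s - 1)‖ ≤ B := by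
      rw [Complex.norm_cpow_eq_rpow_re_of_pos ht0]
      apply stmt3_rpow_bound (Set.mem_Icc.mpr ⟨le_trans ha0 ht.1, le_trans ht.2 hb2⟩)
      have h1 : |s.re| ≤ |R| := by
        calc |s.re| ≤ ‖s‖ := Complex.abs_re_le_norm s
          _ = ‖s‖ := rfl
          _ ≤ R := hR s hs
          _ ≤ |R| := le_abs_self R
      calc |(s - 1).re| = |s.re - 1| := by rw [Complex.sub_re, Complex.one_re]
        _ ≤ |s.re| + 1 := by rw [sub_eq_add_neg]; calc |s.re + -1| ≤ |s.re| + |(-1:ℝ)| := abs_add_le _ _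
                               _ = |s.re| + 1 := by norm_num
        _ ≤ |R| + 1 := by linarith
    calc ‖(φ t : ℂ) - ind t‖ * ‖(t : ℂ) ^ (s - 1)‖ ≤ 1 * B :=
          mul_le_mul hnorm1 hnorm2 (norm_nonneg _) zero_le_one
      _ = B := one_mul B
  -- measurability of h
  have hmeas : AEStronglyMeasurable h (volume.restrict (Set.Ioi (0:ℝ))) := by
    apply AEStronglyMeasurable.mul
    · apply AEStronglyMeasurable.sub
      · exact (Complex.continuous_ofReal.comp hφsm.continuous).aestronglyMeasurable
      · exact ((measurable_const.indicator measurableSet_Ioc).aestronglyMeasurable)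
    · apply ContinuousOn.aestronglyMeasurable _ measurableSet_Ioi
      intro x hx
      exact (continuousAt_ofReal_cpow_const x (s - 1) (Or.inr (ne_of_gt hx))).continuousWithinAt
  -- h is integrable on Ioi 0
  have hhint : IntegrableOn h (Set.Ioi 0) := by
    apply Integrable.mono' (g := Set.indicator (Set.Icc a b) (fun _ => B))
    · exact ((integrable_indicator_iff measurableSet_Icc).mpr
        (integrableOn_const measure_Icc_lt_top.ne)).restrict
    · exact hmeas
    · filter_upwards [ae_restrict_mem measurableSet_Ioi] with t ht
      by_cases htm : t ∈ Set.Icc a b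
      · rw [Set.indicator_of_mem htm]
        exact hbound t htm
      · rw [Set.indicator_of_notMem htm, hzero t ⟨ht, htm⟩, norm_zero]
  -- φ·cpow is integrable
  have hφint : IntegrableOn (fun t : ℝ => (φ t : ℂ) * (t : ℂ) ^ (s - 1)) (Set.Ioi 0) := by
    have h2 : IntegrableOn (h + fun t : ℝ => ind t * (t : ℂ) ^ (s - 1)) (Set.Ioi 0) :=
      hhint.add hindint
    apply h2.congr_fun _ measurableSet_Ioi
    intro t _
    simp only [hh, Pi.add_apply]
    ring
  -- compute the difference
  have hkey : (∫ t in Set.Ioi (0:ℝ), (φ t : ℂ) * (t : ℂ) ^ (s - 1)) - 1/s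
      = ∫ t in Set.Ioi (0:ℝ), h t := by
    rw [← hindval, ← integral_sub hφint hindint]
    apply setIntegral_congr_fun measurableSet_Ioi
    intro t _
    simp only [hh]
    ring
  rw [hkey]
  -- restrict the integral to [a, b]
  have hres : (∫ t in Set.Ioi (0:ℝ), h t) = ∫ t in Set.Icc a b, h t := by
    apply setIntegral_eq_of_subset_of_forall_diff_eq_zero measurableSet_Ioi _ hzero
    intro t ht
    exact lt_of_lt_of_le ha0' ht.1
  rw [hres]
  have hvol : (volume (Set.Icc a b)).toReal = 2 / U := by
    rw [Real.volume_Icc, ENNReal.toReal_ofReal (by linarith)]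
    simp only [ha, hb]
    ring
  calc ‖∫ t in Set.Icc a b, h t‖ ≤ B * (volume (Set.Icc a b)).toReal :=
        norm_setIntegral_le_of_norm_le_const measure_Icc_lt_top hbound
    _ = B * (2 / U) := by rw [hvol]
    _ = 2 * B / U := by ring
end

section
/- Let p₁/q₁, p₂/q₂ ∈ K be fractions in lowest terms over a principal ideal domain O_K (the ring of integers of an imaginary quadratic field of class number one), and let n ⊲ O_K be an ideal. If there exists γ = (a b; c d) with c ∈ n, ad − bc = 1, a,b,c,d ∈ O_K, and γ(p₁/q₁) = p₂/q₂ (Möbius action), then there exists a unit u ∈ O_K^* such that s₁q₂ ≡ u²s₂q₁ mod ((q₁q₂) + n), where s_k is an inverse of p_k modulo (q_k). -/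
/-!
Clearing denominators, `γ (p₁/q₁) = (a p₁ + b q₁) / (c p₁ + d q₁)`, and since `det γ = 1` this
new numerator and denominator are again coprime. Two coprime representations of the same
fraction differ by a unit `u`: `a p₁ + b q₁ = u p₂` and `c p₁ + d q₁ = u q₂`. Modulo
`(q₁ q₂) + n` we have `c = 0`, hence `a d = 1` and `d q₁ = u q₂`; the latter forces `q₂² = 0`,
and the congruences `p_k s_k ≡ 1 mod q_k` then turn these relations into `u² s₁ q₂ = s₂ q₁`.
-/

theorem IsCoprime.moebius {R : Type*} [CommRing R] {p q a b c d : R} (h : IsCoprime p q)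
    (hdet : a * d - b * c = 1) : IsCoprime (a * p + b * q) (c * p + d * q) := by
  obtain ⟨x, y, hxy⟩ := h
  exact ⟨x * d - y * c, y * a - x * b, by linear_combination (a * d - b * c) * hxy + hdet⟩

theorem IsCoprime.exists_unit_of_mul_eq_mul {R : Type*} [CommRing R] {x y p q : R}
    (hxy : IsCoprime x y) (hpq : IsCoprime p q) (h : x * q = p * y) :
    ∃ u : Rˣ, x = u * p ∧ y = u * q := by
  obtain ⟨α, β, hαβ⟩ := hxy
  obtain ⟨γ, δ, hγδ⟩ := hpq
  have hx : x = (x * γ + y * δ) * p := by linear_combination (-x) * hγδ + δ * h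
  have hy : y = (x * γ + y * δ) * q := by linear_combination (-y) * hγδ - γ * h
  have hunit : (x * γ + y * δ) * (α * p + β * q) = 1 := by
    linear_combination hαβ - α * hx - β * hy
  exact ⟨⟨_, _, hunit, by rw [mul_comm, hunit]⟩, hx, hy⟩

theorem mul_eq_mul_of_moebius_div_eq {R K : Type*} [CommRing R] [Field K] {f : R →+* K}
    (hf : Function.Injective f) {a b c d p₁ q₁ p₂ q₂ : R} (hq₁ : q₁ ≠ 0) (hq₂ : q₂ ≠ 0)
    (hden : f c * (f p₁ / f q₁) + f d ≠ 0)
    (hact : (f a * (f p₁ / f q₁) + f b) / (f c * (f p₁ / f q₁) + f d) = f p₂ / f q₂) :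
    (a * p₁ + b * q₁) * q₂ = p₂ * (c * p₁ + d * q₁) := by
  have hq₁' : f q₁ ≠ 0 := (map_ne_zero_iff f hf).2 hq₁
  have hq₂' : f q₂ ≠ 0 := (map_ne_zero_iff f hf).2 hq₂
  simp only [← mul_div_assoc, div_add' _ _ _ hq₁'] at hden hact
  have hden' : f c * f p₁ + f d * f q₁ ≠ 0 := by simpa [hq₁'] using hden
  rw [div_div_div_cancel_right₀ hq₁', div_eq_div_iff hden' hq₂'] at hact
  apply hf
  simpa using hact

theorem unit_sq_mul_eq_of_cusp_transform {S : Type*} [CommRing S]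
    {p₁ q₁ p₂ q₂ s₁ s₂ t₁ t₂ a b d u w : S} (huw : u * w = 1) (hq : q₁ * q₂ = 0)
    (had : a * d = 1) (hA : a * p₁ + b * q₁ = u * p₂) (hC : d * q₁ = u * q₂)
    (hs₁ : t₁ * q₁ = p₁ * s₁ - 1) (hs₂ : t₂ * q₂ = p₂ * s₂ - 1) :
    s₁ * q₂ = w ^ 2 * s₂ * q₁ := by
  have hq₂ : q₂ ^ 2 = 0 := by linear_combination (-q₂ ^ 2) * huw - w * q₂ * hC + w * d * hq
  have hkey : u * s₁ * q₂ = a * s₂ * q₂ := by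
    linear_combination (-a * s₂ * q₂) * hs₁ + (a * s₂ * t₁ + b * s₁ * s₂) * hq
      - s₁ * s₂ * q₂ * hA - u * s₁ * t₂ * hq₂ + u * s₁ * q₂ * hs₂
  linear_combination (-s₁ * q₂ * (u * w + 1)) * huw
    + w ^ 2 * (u * hkey + s₂ * q₁ * had - a * s₂ * hC)

theorem sub_mem_span_sup_of_cusp_transform {R : Type*} [CommRing R] (n : Ideal R)
    {p₁ q₁ p₂ q₂ s₁ s₂ a b c d : R} (u : Rˣ) (hcn : c ∈ n) (hdet : a * d - b * c = 1)
    (hA : a * p₁ + b * q₁ = u * p₂) (hC : c * p₁ + d * q₁ = u * q₂)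
    (hs₁ : p₁ * s₁ - 1 ∈ Ideal.span {q₁}) (hs₂ : p₂ * s₂ - 1 ∈ Ideal.span {q₂}) :
    s₁ * q₂ - (↑u⁻¹ : R) ^ 2 * s₂ * q₁ ∈ Ideal.span {q₁ * q₂} ⊔ n := by
  obtain ⟨t₁, ht₁⟩ := Ideal.mem_span_singleton'.mp hs₁
  obtain ⟨t₂, ht₂⟩ := Ideal.mem_span_singleton'.mp hs₂
  set π := Ideal.Quotient.mk (Ideal.span {q₁ * q₂} ⊔ n)
  have hc : π c = 0 := Ideal.Quotient.eq_zero_iff_mem.2 (Ideal.mem_sup_right hcn)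
  have hq : π q₁ * π q₂ = 0 := by
    rw [← map_mul]
    exact Ideal.Quotient.eq_zero_iff_mem.2
      (Ideal.mem_sup_left (Ideal.mem_span_singleton_self _))
  have huw : π u * π ↑u⁻¹ = 1 := by rw [← map_mul, Units.mul_inv, map_one]
  have had : π a * π d = 1 := by simpa [hc] using congrArg π hdet
  have hA' : π a * π p₁ + π b * π q₁ = π u * π p₂ := by simpa using congrArg π hA
  have hC' : π d * π q₁ = π u * π q₂ := by simpa [hc] using congrArg π hC
  have hs₁' : π t₁ * π q₁ = π p₁ * π s₁ - 1 := by simpa using congrArg π ht₁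
  have hs₂' : π t₂ * π q₂ = π p₂ * π s₂ - 1 := by simpa using congrArg π ht₂
  rw [← Ideal.Quotient.eq_zero_iff_mem, map_sub, sub_eq_zero]
  simpa using unit_sq_mul_eq_of_cusp_transform huw hq had hA' hC' hs₁' hs₂'

theorem stmt19_general (R : Type*) [CommRing R] [IsDomain R]
    (n : Ideal R) (p₁ q₁ p₂ q₂ s₁ s₂ : R)
    (hq₁ : q₁ ≠ 0) (hq₂ : q₂ ≠ 0)
    (hcop₁ : IsCoprime p₁ q₁) (hcop₂ : IsCoprime p₂ q₂)
    (hs₁ : p₁ * s₁ - 1 ∈ Ideal.span {q₁}) (hs₂ : p₂ * s₂ - 1 ∈ Ideal.span {q₂})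
    (a b c d : R) (hcn : c ∈ n) (hdet : a * d - b * c = 1)
    (hden : algebraMap R (FractionRing R) c *
        (algebraMap R (FractionRing R) p₁ / algebraMap R (FractionRing R) q₁) +
        algebraMap R (FractionRing R) d ≠ 0)
    (hact : (algebraMap R (FractionRing R) a *
        (algebraMap R (FractionRing R) p₁ / algebraMap R (FractionRing R) q₁) +
        algebraMap R (FractionRing R) b) /
      (algebraMap R (FractionRing R) c *
        (algebraMap R (FractionRing R) p₁ / algebraMap R (FractionRing R) q₁) +
        algebraMap R (FractionRing R) d) =
      algebraMap R (FractionRing R) p₂ / algebraMap R (FractionRing R) q₂) :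
    ∃ u : Rˣ, s₁ * q₂ - (u : R)^2 * s₂ * q₁ ∈ Ideal.span {q₁ * q₂} ⊔ n := by
  have hcross := mul_eq_mul_of_moebius_div_eq (IsFractionRing.injective R (FractionRing R))
    hq₁ hq₂ hden hact
  obtain ⟨u, hA, hC⟩ := (hcop₁.moebius hdet).exists_unit_of_mul_eq_mul hcop₂ hcross
  exact ⟨u⁻¹, sub_mem_span_sup_of_cusp_transform n u hcn hdet hA hC hs₁ hs₂⟩

/-- Γ₀(n)-equivalence of cusps over a principal ideal domain
(the ring of integers of an imaginary quadratic field of class number one). -/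
theorem stmt19 (R : Type*) [CommRing R] [IsDomain R] [IsPrincipalIdealRing R]
    (n : Ideal R) (p₁ q₁ p₂ q₂ s₁ s₂ : R)
    (hq₁ : q₁ ≠ 0) (hq₂ : q₂ ≠ 0)
    (hcop₁ : IsCoprime p₁ q₁) (hcop₂ : IsCoprime p₂ q₂)
    (hs₁ : p₁ * s₁ - 1 ∈ Ideal.span {q₁}) (hs₂ : p₂ * s₂ - 1 ∈ Ideal.span {q₂})
    (a b c d : R) (hcn : c ∈ n) (hdet : a * d - b * c = 1)
    (hden : algebraMap R (FractionRing R) c *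
        (algebraMap R (FractionRing R) p₁ / algebraMap R (FractionRing R) q₁) +
        algebraMap R (FractionRing R) d ≠ 0)
    (hact : (algebraMap R (FractionRing R) a *
        (algebraMap R (FractionRing R) p₁ / algebraMap R (FractionRing R) q₁) +
        algebraMap R (FractionRing R) b) /
      (algebraMap R (FractionRing R) c *
        (algebraMap R (FractionRing R) p₁ / algebraMap R (FractionRing R) q₁) +
        algebraMap R (FractionRing R) d) =
      algebraMap R (FractionRing R) p₂ / algebraMap R (FractionRing R) q₂) :
    ∃ u : Rˣ, s₁ * q₂ - (u : R)^2 * s₂ * q₁ ∈ Ideal.span {q₁ * q₂} ⊔ n :=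
  stmt19_general R n p₁ q₁ p₂ q₂ s₁ s₂ hq₁ hq₂ hcop₁ hcop₂ hs₁ hs₂ a b c d hcn hdet hden hact
end
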